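/- Let A be an associative unital ℝ-algebra containing families X, P : Fin D → A and M : Fin D → Fin D → A satisfying: ⁅P m, X n⁆ = η m n • 1, ⁅P m, P n⁆ = 0, ⁅X m, X n⁆ = 0, ⁅M m n, X k⁆ = 0, ⁅M m n, P k⁆ = 0, M m n = −M n m, and ⁅M m n, M k l⁆ = η n k • M m l + η m l • M n k − η n l • M m k − η m k • M n l. Define J m n := X m * P n − X n * P m + M m n. Then Σ_n ε n • Π n * Π n + (1/2) • J₍₂₎ * P² = Σ_n ε n • 𝒫 n * 𝒫 n + (1/2) • M₍₂₎ * P², where Π n := Σ_m ε m • P m * J m n, 𝒫 n := Σ_m ε m • P m * M m n, P² := Σ_m ε m • P m * P m, J₍₂₎ := Σ_{m,n} (ε m * ε n) • J m n * J n m, and M₍₂₎ := Σ_{m,n} (ε m * ε n) • M m n * M n m. (The orbital part of the angular momentum cancels in the fourth-order Casimir of iso(p,q).) -/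

import Mathlib

/-!
Split `J = L + M` with `L m n = X m P n - X n P m`. As `M` commutes with `X` and `P`, the identity
splits into two: the quartic Casimir `Π_L·Π_L + ½ L₍₂₎ P²` of the purely orbital generators
vanishes, and so do the terms linear in `M`. Both are normal-ordering computations with `S = P·X`
and `Q = P·P`, whose commutators `[S, P n] = -P n`, `[S, X n] = X n`, `[Q, X n] = 2 P n` and
`[Q, S] = 2 Q` turn `Π_L n` into `P n (S - 2) - X n Q`. Among the terms linear in `M`, the
contributions `(X·𝒫) Q` of `Π·Π` and of `½ J₍₂₎ P²` cancel, and the rest is a multiple of `𝒫·P`,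
which vanishes because `M m n` is antisymmetric while `P m P n` is symmetric.
-/

noncomputable section

def eps (p : ℕ) {D : ℕ} (m : Fin D) : ℝ := if (m : ℕ) < p then -1 else 1

def eta (p : ℕ) {D : ℕ} (m n : Fin D) : ℝ := if m = n then eps p m else 0

open Finset Matrix

namespace IsoCasimir

lemma eq_zero_of_eq_neg {V : Type*} [AddCommGroup V] [Module ℝ V] {x : V} (h : x = -x) :
    x = 0 := by
  have : (2 : ℝ) • x = 0 := by rw [two_smul]; nth_rewrite 2 [h]; exact add_neg_cancel x
  simpa using this

lemma sum_sum_eq_zero_of_antisymm {ι V : Type*} [Fintype ι] [AddCommGroup V] [Module ℝ V]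
    {f : ι → ι → V} (hf : ∀ m n, f m n = -f n m) : ∑ m, ∑ n, f m n = 0 :=
  eq_zero_of_eq_neg <| by
    nth_rewrite 1 [sum_comm]
    rw [← sum_neg_distrib]
    refine sum_congr rfl fun n _ => ?_
    rw [← sum_neg_distrib]
    exact sum_congr rfl fun m _ => hf m n

variable {ι A : Type*} [Ring A]

def orbital (X P : ι → A) (m n : ι) : A := X m * P n - X n * P m

lemma orbital_antisymm (X P : ι → A) (m n : ι) : orbital X P m n = -orbital X P n m :=
  (neg_sub _ _).symm

variable [Algebra ℝ A]

structure IsCanonicalPair [DecidableEq ι] (ε : ι → ℝ) (X P : ι → A) : Prop where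
  lie_P_X : ∀ m n, ⁅P m, X n⁆ = diagonal ε m n • (1 : A)
  commute_P : ∀ m n, Commute (P m) (P n)
  commute_X : ∀ m n, Commute (X m) (X n)

lemma IsCanonicalPair.P_mul_X [DecidableEq ι] {ε : ι → ℝ} {X P : ι → A}
    (h : IsCanonicalPair ε X P) (m n : ι) : P m * X n = X n * P m + diagonal ε m n • 1 := by
  rw [← h.lie_P_X, Ring.lie_def]; abel

lemma IsCanonicalPair.X_mul_P [DecidableEq ι] {ε : ι → ℝ} {X P : ι → A}
    (h : IsCanonicalPair ε X P) (m n : ι) : X m * P n = P n * X m - diagonal ε n m • 1 := by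
  rw [h.P_mul_X]; abel

variable [Fintype ι] (ε : ι → ℝ)

def contract (f g : ι → A) : A := ∑ i, ε i • (f i * g i)

def contract₂ (J K : ι → ι → A) : A := ∑ m, ∑ n, (ε m * ε n) • (J m n * K n m)

lemma contract_add_left (f g h : ι → A) :
    contract ε (fun i => f i + g i) h = contract ε f h + contract ε g h := by
  simp only [contract, add_mul, smul_add, sum_add_distrib]

lemma contract_add_right (f g h : ι → A) :
    contract ε f (fun i => g i + h i) = contract ε f g + contract ε f h := by
  simp only [contract, mul_add, smul_add, sum_add_distrib]

lemma contract_sub_right (f g h : ι → A) :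
    contract ε f (fun i => g i - h i) = contract ε f g - contract ε f h := by
  simp only [contract, mul_sub, smul_sub, sum_sub_distrib]

lemma mul_contract (a : A) (f g : ι → A) :
    a * contract ε f g = contract ε (fun i => a * f i) g := by
  simp only [contract, mul_sum, mul_smul_comm, mul_assoc]

lemma contract_mul (f g : ι → A) (a : A) :
    contract ε f g * a = contract ε f (fun i => g i * a) := by
  simp only [contract, sum_mul, smul_mul_assoc, mul_assoc]

def vecContract (v : ι → A) (J : ι → ι → A) (n : ι) : A := contract ε v (J · n)

lemma vecContract_add (v : ι → A) (J K : ι → ι → A) (n : ι) :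
    vecContract ε v (fun i j => J i j + K i j) n = vecContract ε v J n + vecContract ε v K n :=
  contract_add_right ε v _ _

lemma contract₂_add_left (J K L : ι → ι → A) :
    contract₂ ε (fun m n => J m n + K m n) L = contract₂ ε J L + contract₂ ε K L := by
  simp only [contract₂, add_mul, smul_add, sum_add_distrib]

lemma contract₂_add_right (J K L : ι → ι → A) :
    contract₂ ε J (fun m n => K m n + L m n) = contract₂ ε J K + contract₂ ε J L := by
  simp only [contract₂, mul_add, smul_add, sum_add_distrib]

lemma contract₂_sub_left (J K L : ι → ι → A) :
    contract₂ ε (fun m n => J m n - K m n) L = contract₂ ε J L - contract₂ ε K L := by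
  simp only [contract₂, sub_mul, smul_sub, sum_sub_distrib]

lemma contract₂_sub_right (J K L : ι → ι → A) :
    contract₂ ε J (fun m n => K m n - L m n) = contract₂ ε J K - contract₂ ε J L := by
  simp only [contract₂, mul_sub, smul_sub, sum_sub_distrib]

lemma contract₂_transpose_left (J K : ι → ι → A) :
    contract₂ ε (fun m n => J n m) K = contract₂ ε J (fun m n => K n m) := by
  conv_lhs => rw [contract₂, sum_comm]
  exact sum_congr rfl fun m _ => sum_congr rfl fun n _ => by rw [mul_comm]

lemma contract₂_sub_transpose_left {K : ι → ι → A} (hK : ∀ m n, K m n = -K n m)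
    (J : ι → ι → A) :
    contract₂ ε (fun m n => J m n - J n m) K = (2 : ℝ) • contract₂ ε J K := by
  have hT : contract₂ ε (fun m n => J n m) K = -contract₂ ε J K := by
    rw [contract₂_transpose_left, contract₂, contract₂, ← sum_neg_distrib]
    refine sum_congr rfl fun m _ => ?_
    rw [← sum_neg_distrib]
    exact sum_congr rfl fun n _ => by simp only [hK n m, mul_neg, smul_neg, neg_neg]
  rw [contract₂_sub_left, hT, sub_neg_eq_add, two_smul]

lemma contract₂_comm {J K : ι → ι → A} (hJK : ∀ m n k l, Commute (J m n) (K k l)) :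
    contract₂ ε J K = contract₂ ε K J := by
  conv_rhs => rw [contract₂, sum_comm]
  exact sum_congr rfl fun m _ => sum_congr rfl fun n _ => by rw [mul_comm, (hJK m n n m).eq]

lemma contract₂_mul_left (f g : ι → A) (K : ι → ι → A) :
    contract₂ ε (fun m n => f m * g n) K = contract ε f (fun m => contract ε g (K · m)) := by
  simp only [contract₂, contract, mul_sum, smul_sum, mul_smul_comm, smul_smul, mul_assoc]

section Kronecker

variable {ε} [DecidableEq ι] {V : Type*} [AddCommGroup V] [Module ℝ V]

lemma sum_smul_diagonal_smul (hε : ∀ i, ε i * ε i = 1) (f : ι → V) (n : ι) :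
    ∑ m, ε m • (diagonal ε m n • f m) = f n := by
  simp [diagonal_apply, smul_smul, hε]

lemma sum_smul_diagonal_smul' (hε : ∀ i, ε i * ε i = 1) (f : ι → V) (n : ι) :
    ∑ m, ε m • (diagonal ε n m • f m) = f n := by
  simp [diagonal_apply, smul_smul, hε]

end Kronecker

lemma contract₂_orbital_add_contract₂ {X P : ι → A} {M : ι → ι → A}
    (hMX : ∀ m n k, Commute (M m n) (X k)) (hMP : ∀ m n k, Commute (M m n) (P k))
    (hanti : ∀ m n, M m n = -M n m) :
    contract₂ ε (orbital X P) M + contract₂ ε M (orbital X P) =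
      (4 : ℝ) • contract ε X (vecContract ε P M) := by
  have hcomm (m n k l : ι) : Commute (M m n) (orbital X P k l) :=
    ((hMX m n k).mul_right (hMP m n l)).sub_right ((hMX m n l).mul_right (hMP m n k))
  rw [contract₂_comm ε hcomm, show orbital X P = fun m n => X m * P n - X n * P m from rfl,
    contract₂_sub_transpose_left ε hanti, contract₂_mul_left, ← add_smul]
  norm_num
  rfl

namespace IsCanonicalPair

variable {ε} [DecidableEq ι] {X P : ι → A}

lemma contract_PX_mul_P (h : IsCanonicalPair ε X P) (hε : ∀ i, ε i * ε i = 1) (n : ι) :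
    contract ε P X * P n = P n * (contract ε P X - 1) := by
  calc contract ε P X * P n = ∑ m, ε m • (P n * (P m * X m) - diagonal ε n m • P m) := by
        simp only [contract, sum_mul, smul_mul_assoc]
        refine sum_congr rfl fun m _ => ?_
        rw [mul_assoc, h.X_mul_P, mul_sub, mul_smul_comm, mul_one, ← mul_assoc,
          (h.commute_P m n).eq, mul_assoc]
    _ = P n * (contract ε P X - 1) := by
        simp only [smul_sub, sum_sub_distrib, sum_smul_diagonal_smul' hε, contract, mul_sub,
          mul_one, mul_sum, mul_smul_comm]

lemma contract_PX_mul_X (h : IsCanonicalPair ε X P) (hε : ∀ i, ε i * ε i = 1) (n : ι) :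
    contract ε P X * X n = X n * (contract ε P X + 1) := by
  calc contract ε P X * X n = ∑ m, ε m • (X n * (P m * X m) + diagonal ε m n • X m) := by
        simp only [contract, sum_mul, smul_mul_assoc]
        refine sum_congr rfl fun m _ => ?_
        rw [mul_assoc, (h.commute_X m n).eq, ← mul_assoc, h.P_mul_X, add_mul, smul_mul_assoc,
          one_mul, mul_assoc]
    _ = X n * (contract ε P X + 1) := by
        simp only [smul_add, sum_add_distrib, sum_smul_diagonal_smul hε, contract, mul_add,
          mul_one, mul_sum, mul_smul_comm]

lemma commute_contract_PP (h : IsCanonicalPair ε X P) (n : ι) :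
    Commute (contract ε P P) (P n) :=
  Commute.sum_left _ _ _ fun m _ =>
    ((h.commute_P m n).mul_left (h.commute_P m n)).smul_left _

lemma contract_P_mul_X_mul_P (h : IsCanonicalPair ε X P) (hε : ∀ i, ε i * ε i = 1) (n : ι) :
    contract ε P (fun m => X n * P m) = X n * contract ε P P + P n := by
  calc contract ε P (fun m => X n * P m)
        = ∑ m, ε m • (X n * (P m * P m) + diagonal ε m n • P m) := by
        refine sum_congr rfl fun m _ => ?_
        rw [← mul_assoc, h.P_mul_X, add_mul, smul_mul_assoc, one_mul, mul_assoc]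
    _ = X n * contract ε P P + P n := by
        simp only [smul_add, sum_add_distrib, sum_smul_diagonal_smul hε, contract, mul_sum,
          mul_smul_comm]

lemma contract_PP_mul_X (h : IsCanonicalPair ε X P) (hε : ∀ i, ε i * ε i = 1) (n : ι) :
    contract ε P P * X n = X n * contract ε P P + 2 * P n := by
  rw [contract_mul, funext fun m => h.P_mul_X m n, contract_add_right,
    h.contract_P_mul_X_mul_P hε, add_assoc, two_mul]
  congr 2
  simp only [contract, mul_smul_comm, mul_one, sum_smul_diagonal_smul hε]

lemma contract_PP_mul_PX (h : IsCanonicalPair ε X P) (hε : ∀ i, ε i * ε i = 1) :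
    contract ε P P * contract ε P X = (contract ε P X + 2) * contract ε P P := by
  calc contract ε P P * contract ε P X = contract ε P (fun m => contract ε P P * X m) := by
        rw [mul_contract, funext fun m => (h.commute_contract_PP m).eq]
        simp only [contract, mul_assoc]
    _ = (contract ε P X + 2) * contract ε P P := by
        simp only [h.contract_PP_mul_X hε, contract_add_right, ← contract_mul, add_mul, two_mul]

lemma vecContract_orbital (h : IsCanonicalPair ε X P) (hε : ∀ i, ε i * ε i = 1) (n : ι) :
    vecContract ε P (orbital X P) n = P n * (contract ε P X - 2) - X n * contract ε P P := by
  simp only [vecContract, orbital]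
  rw [contract_sub_right, ← contract_mul, h.contract_PX_mul_P hε, h.contract_P_mul_X_mul_P hε]
  noncomm_ring

lemma contract_vecContract_orbital_self (h : IsCanonicalPair ε X P)
    (hε : ∀ i, ε i * ε i = 1) :
    contract ε (vecContract ε P (orbital X P)) (vecContract ε P (orbital X P)) =
      contract ε X P * (2 - contract ε P X) * contract ε P P +
        contract ε X X * contract ε P P * contract ε P P := by
  have hS_P (n : ι) := h.contract_PX_mul_P hε n
  have hS_X (n : ι) := h.contract_PX_mul_X hε n
  have hQ_P (n : ι) := (h.commute_contract_PP n).eq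
  have hQ_X (n : ι) := h.contract_PP_mul_X hε n
  have hQ_S := h.contract_PP_mul_PX hε
  simp only [funext (h.vecContract_orbital hε)]
  set S := contract ε P X
  set Q := contract ε P P
  have hsq (n : ι) : (P n * (S - 2) - X n * Q) * (P n * (S - 2) - X n * Q) =
      P n * P n * ((S - 3) * (S - 2)) - P n * X n * ((S - 1) * Q) +
        X n * P n * ((2 - S) * Q) + X n * X n * (Q * Q) := by
    calc _ = P n * ((S - 2) * P n) * (S - 2) - P n * ((S - 2) * X n) * Q
          - X n * (Q * P n) * (S - 2) + X n * (Q * X n) * Q := by noncomm_ring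
      _ = P n * P n * ((S - 3) * (S - 2)) - P n * X n * ((S - 1) * Q)
          - X n * P n * (Q * S - 2 * Q) + X n * X n * (Q * Q) + 2 * (X n * P n * Q) := by
        simp only [sub_mul, hS_P, hS_X, hQ_P, hQ_X]
        noncomm_ring
      _ = _ := by rw [hQ_S]; noncomm_ring
  have hQ_S2 : Q * (S - 2) = S * Q := by rw [mul_sub, hQ_S]; noncomm_ring
  have hQ_S3 : Q * (S - 3) = (S - 1) * Q := by rw [mul_sub, hQ_S]; noncomm_ring
  calc contract ε (fun n => P n * (S - 2) - X n * Q) (fun n => P n * (S - 2) - X n * Q)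
      = contract ε P P * ((S - 3) * (S - 2)) - contract ε P X * ((S - 1) * Q) +
          contract ε X P * ((2 - S) * Q) + contract ε X X * (Q * Q) := by
        simp only [contract, hsq, smul_add, smul_sub, sum_add_distrib, sum_sub_distrib, sum_mul,
          smul_mul_assoc]
    _ = (S - 1) * (S * Q) - S * ((S - 1) * Q) + contract ε X P * ((2 - S) * Q) +
          contract ε X X * (Q * Q) := by
        rw [← mul_assoc Q, hQ_S3, mul_assoc, hQ_S2]
    _ = _ := by noncomm_ring

lemma contract₂_orbital_self (h : IsCanonicalPair ε X P) (hε : ∀ i, ε i * ε i = 1) :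
    contract₂ ε (orbital X P) (orbital X P) = (2 : ℝ) •
      (contract ε X P * (contract ε P X - 2) - contract ε X X * contract ε P P) := by
  have hL : orbital X P = fun m n => X m * P n - X n * P m := rfl
  nth_rewrite 1 [hL]
  rw [contract₂_sub_transpose_left ε (orbital_antisymm X P), hL, contract₂_sub_right,
    contract₂_mul_left, contract₂_mul_left]
  simp only [← contract_mul, h.contract_PX_mul_P hε, h.contract_P_mul_X_mul_P hε]
  rw [contract_add_right, ← contract_mul]
  congr 1
  noncomm_ring

lemma orbital_casimir (h : IsCanonicalPair ε X P) (hε : ∀ i, ε i * ε i = 1) :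
    contract ε (vecContract ε P (orbital X P)) (vecContract ε P (orbital X P)) +
      (1 / 2 : ℝ) • (contract₂ ε (orbital X P) (orbital X P) * contract ε P P) = 0 := by
  rw [h.contract_vecContract_orbital_self hε, h.contract₂_orbital_self hε, smul_mul_assoc,
    smul_smul]
  norm_num
  noncomm_ring

variable {M : ι → ι → A}

lemma commute_vecContract_P (h : IsCanonicalPair ε X P) (hMP : ∀ m n k, Commute (M m n) (P k))
    (n k : ι) : Commute (vecContract ε P M n) (P k) :=
  Commute.sum_left _ _ _ fun m _ => ((h.commute_P m k).mul_left (hMP m n k)).smul_left _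

lemma vecContract_mul_X (h : IsCanonicalPair ε X P) (hε : ∀ i, ε i * ε i = 1)
    (hMX : ∀ m n k, Commute (M m n) (X k)) (n k : ι) :
    vecContract ε P M n * X k = X k * vecContract ε P M n + M k n := by
  calc vecContract ε P M n * X k
        = ∑ m, ε m • (X k * (P m * M m n) + diagonal ε m k • M m n) := by
        simp only [vecContract, contract, sum_mul, smul_mul_assoc]
        refine sum_congr rfl fun m _ => ?_
        rw [mul_assoc, (hMX m n k).eq, ← mul_assoc, h.P_mul_X, add_mul, smul_mul_assoc, one_mul,
          mul_assoc]
    _ = X k * vecContract ε P M n + M k n := by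
        simp only [smul_add, sum_add_distrib, sum_smul_diagonal_smul hε, vecContract, contract,
          mul_sum, mul_smul_comm]

lemma vecContract_mul_PX (h : IsCanonicalPair ε X P) (hε : ∀ i, ε i * ε i = 1)
    (hMX : ∀ m n k, Commute (M m n) (X k)) (hMP : ∀ m n k, Commute (M m n) (P k)) (n : ι) :
    vecContract ε P M n * contract ε P X = (contract ε P X + 1) * vecContract ε P M n := by
  calc vecContract ε P M n * contract ε P X
        = contract ε P (fun k => vecContract ε P M n * X k) := by
        rw [mul_contract, funext fun k => (h.commute_vecContract_P hMP n k).eq]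
        simp only [contract, mul_assoc]
    _ = (contract ε P X + 1) * vecContract ε P M n := by
        simp only [h.vecContract_mul_X hε hMX, contract_add_right, ← contract_mul, add_mul,
          one_mul]
        rfl

lemma contract_vecContract_P (h : IsCanonicalPair ε X P) (hMP : ∀ m n k, Commute (M m n) (P k))
    (hanti : ∀ m n, M m n = -M n m) : contract ε (vecContract ε P M) P = 0 := by
  simp only [contract, vecContract, sum_mul, smul_sum, smul_mul_assoc, smul_smul]
  refine sum_sum_eq_zero_of_antisymm fun n m => ?_
  rw [mul_comm (ε n), ← smul_neg, hanti m n, mul_neg, neg_mul, mul_assoc, (hMP n m n).eq,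
    ← mul_assoc, (h.commute_P m n).eq, mul_assoc, ← (hMP n m m).eq, ← mul_assoc]

lemma contract_vecContract_orbital_spin (h : IsCanonicalPair ε X P) (hε : ∀ i, ε i * ε i = 1)
    (hMX : ∀ m n k, Commute (M m n) (X k)) (hMP : ∀ m n k, Commute (M m n) (P k))
    (hanti : ∀ m n, M m n = -M n m) :
    contract ε (vecContract ε P (orbital X P)) (vecContract ε P M) +
        contract ε (vecContract ε P M) (vecContract ε P (orbital X P)) =
      -(2 * (contract ε X (vecContract ε P M) * contract ε P P)) := by
  have hC_S (n : ι) := h.vecContract_mul_PX hε hMX hMP n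
  have hC_P (n : ι) := (h.commute_vecContract_P hMP n n).eq
  have hC_Q (n : ι) : Commute (vecContract ε P M n) (contract ε P P) :=
    Commute.sum_right _ _ _ fun m _ =>
      ((h.commute_vecContract_P hMP n m).mul_right (h.commute_vecContract_P hMP n m)).smul_right _
  have hC_X (n : ι) : vecContract ε P M n * X n = X n * vecContract ε P M n := by
    rw [h.vecContract_mul_X hε hMX, eq_zero_of_eq_neg (hanti n n), add_zero]
  have hCP := h.contract_vecContract_P hMP hanti
  simp only [funext (h.vecContract_orbital hε)]
  set S := contract ε P X
  set Q := contract ε P P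
  set C := vecContract ε P M
  have hS_C (n : ι) : (S - 2) * C n = C n * (S - 3) := by
    rw [sub_mul, show S * C n = C n * S - C n by rw [hC_S]; noncomm_ring]
    noncomm_ring
  have hsum (n : ι) :
      (P n * (S - 2) - X n * Q) * C n + C n * (P n * (S - 2) - X n * Q) =
        C n * P n * ((S - 3) + (S - 2)) - 2 * (X n * C n * Q) := by
    calc _ = P n * ((S - 2) * C n) - X n * (Q * C n) + C n * P n * (S - 2) - C n * X n * Q := by
          noncomm_ring
      _ = _ := by
          rw [hS_C, ← (hC_Q n).eq, hC_X, ← mul_assoc (P n), ← hC_P]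
          noncomm_ring
  calc contract ε (fun n => P n * (S - 2) - X n * Q) C +
        contract ε C (fun n => P n * (S - 2) - X n * Q)
      = contract ε C P * ((S - 3) + (S - 2)) - 2 * (contract ε X C * Q) := by
        simp only [contract, ← sum_add_distrib, ← smul_add, hsum, smul_sub, sum_sub_distrib,
          sum_mul, smul_mul_assoc, mul_sum, mul_smul_comm]
    _ = _ := by rw [hCP, zero_mul, zero_sub]

lemma orbital_spin_casimir (h : IsCanonicalPair ε X P) (hε : ∀ i, ε i * ε i = 1)
    (hMX : ∀ m n k, Commute (M m n) (X k)) (hMP : ∀ m n k, Commute (M m n) (P k))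
    (hanti : ∀ m n, M m n = -M n m) :
    contract ε (vecContract ε P (orbital X P)) (vecContract ε P M) +
        contract ε (vecContract ε P M) (vecContract ε P (orbital X P)) +
      (1 / 2 : ℝ) • ((contract₂ ε (orbital X P) M + contract₂ ε M (orbital X P)) *
        contract ε P P) = 0 := by
  rw [h.contract_vecContract_orbital_spin hε hMX hMP hanti,
    contract₂_orbital_add_contract₂ ε hMX hMP hanti, smul_mul_assoc, smul_smul]
  norm_num
  rw [two_smul, two_mul, neg_add_cancel]

end IsCanonicalPair

lemma eps_mul_self (p : ℕ) {D : ℕ} (m : Fin D) : eps p m * eps p m = 1 := by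
  unfold eps; split_ifs <;> norm_num

end IsoCasimir

open IsoCasimir in
theorem stmt_5_general (p q : ℕ) (A : Type*) [Ring A] [Algebra ℝ A]
    (X P : Fin (p + q) → A) (M : Fin (p + q) → Fin (p + q) → A)
    (hPX : ∀ m n, ⁅P m, X n⁆ = eta p m n • (1 : A))
    (hPP : ∀ m n, ⁅P m, P n⁆ = 0)
    (hXX : ∀ m n, ⁅X m, X n⁆ = 0)
    (hMX : ∀ m n k, ⁅M m n, X k⁆ = 0)
    (hMP : ∀ m n k, ⁅M m n, P k⁆ = 0)
    (hanti : ∀ m n, M m n = - M n m) :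
    let D := p + q
    let J : Fin D → Fin D → A := fun m n => X m * P n - X n * P m + M m n
    let Pie : Fin D → A := fun n => ∑ m : Fin D, eps p m • (P m * J m n)
    let Pc : Fin D → A := fun n => ∑ m : Fin D, eps p m • (P m * M m n)
    let Psq : A := ∑ m : Fin D, eps p m • (P m * P m)
    let J2 : A := ∑ m : Fin D, ∑ n : Fin D, (eps p m * eps p n) • (J m n * J n m)
    let M2 : A := ∑ m : Fin D, ∑ n : Fin D, (eps p m * eps p n) • (M m n * M n m)
    (∑ n : Fin D, eps p n • (Pie n * Pie n)) + (1 / 2 : ℝ) • (J2 * Psq) =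
      (∑ n : Fin D, eps p n • (Pc n * Pc n)) + (1 / 2 : ℝ) • (M2 * Psq) := by
  intro D J Pie Pc Psq J2 M2
  have h : IsCanonicalPair (eps p) X P :=
    ⟨hPX, fun m n => commute_iff_lie_eq.mpr (hPP m n),
      fun m n => commute_iff_lie_eq.mpr (hXX m n)⟩
  have hMX' (m n k : Fin D) := commute_iff_lie_eq.mpr (hMX m n k)
  have hMP' (m n k : Fin D) := commute_iff_lie_eq.mpr (hMP m n k)
  have hPie : Pie = fun n => vecContract (eps p) P (orbital X P) n + vecContract (eps p) P M n :=
    funext fun n => vecContract_add (eps p) P (orbital X P) M n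
  change contract (eps p) Pie Pie +
      (1 / 2 : ℝ) • (contract₂ (eps p) (fun m n => orbital X P m n + M m n)
        (fun m n => orbital X P m n + M m n) * contract (eps p) P P) =
    contract (eps p) (vecContract (eps p) P M) (vecContract (eps p) P M) +
      (1 / 2 : ℝ) • (contract₂ (eps p) M M * contract (eps p) P P)
  rw [hPie, contract_add_left, contract_add_right, contract_add_right, contract₂_add_left,
    contract₂_add_right, contract₂_add_right]
  have horb := h.orbital_casimir (eps_mul_self p)
  have hspin := h.orbital_spin_casimir (eps_mul_self p) hMX' hMP' hanti
  simp only [add_mul, smul_add] at hspin ⊢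
  linear_combination (norm := module) horb + hspin

theorem stmt_5 (p q : ℕ) (A : Type*) [Ring A] [Algebra ℝ A]
    (X P : Fin (p + q) → A) (M : Fin (p + q) → Fin (p + q) → A)
    (hPX : ∀ m n, ⁅P m, X n⁆ = eta p m n • (1 : A))
    (hPP : ∀ m n, ⁅P m, P n⁆ = 0)
    (hXX : ∀ m n, ⁅X m, X n⁆ = 0)
    (hMX : ∀ m n k, ⁅M m n, X k⁆ = 0)
    (hMP : ∀ m n k, ⁅M m n, P k⁆ = 0)
    (hanti : ∀ m n, M m n = - M n m)
    (hso : ∀ m n k l, ⁅M m n, M k l⁆ =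
      eta p n k • M m l + eta p m l • M n k - eta p n l • M m k - eta p m k • M n l) :
    let D := p + q
    let J : Fin D → Fin D → A := fun m n => X m * P n - X n * P m + M m n
    let Pie : Fin D → A := fun n => ∑ m : Fin D, eps p m • (P m * J m n)
    let Pc : Fin D → A := fun n => ∑ m : Fin D, eps p m • (P m * M m n)
    let Psq : A := ∑ m : Fin D, eps p m • (P m * P m)
    let J2 : A := ∑ m : Fin D, ∑ n : Fin D, (eps p m * eps p n) • (J m n * J n m)
    let M2 : A := ∑ m : Fin D, ∑ n : Fin D, (eps p m * eps p n) • (M m n * M n m)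
    (∑ n : Fin D, eps p n • (Pie n * Pie n)) + (1 / 2 : ℝ) • (J2 * Psq) =
      (∑ n : Fin D, eps p n • (Pc n * Pc n)) + (1 / 2 : ℝ) • (M2 * Psq) :=
  stmt_5_general p q A X P M hPX hPP hXX hMX hMP hanti
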